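/- arXiv:2104.09077 — 2 statements merged into one kernel-verified Lean document; each statement's English description precedes it below -/
import Mathlib

section
/- There is an absolute constant C > 0 such that for every smooth Y : ℝ × ℝ³ → ℝ³, every t ≥ 0 and every y ∈ ℝ³ with r = |y| > 0: |(t − r) ΔY| ≤ C ( Σ_Z |∂ Z Y| + |∂Y| + t |(∂_t² − Δ)Y| ) at the point (t,y), where the sum runs over Z ∈ {∂_t, ∂₁, ∂₂, Ω̃₁, Ω̃₂, Ω̃₃, S̃}. -/
/-!
STATEMENT 14: Pointwise estimate (C-6):
|(t − r)ΔY| ≤ C ( Σ_Z |∂ Z Y| + |∂Y| + t |(∂_t² − Δ)Y| ),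
where Z ranges over {∂_t, ∂₁, ∂₂, Ω̃₁, Ω̃₂, Ω̃₃, S̃}.
-/

noncomputable section

namespace Stmt14

abbrev Pt : Type := EuclideanSpace ℝ (Fin 3)

/-- Scalar space-time functions. -/
abbrev STF : Type := ℝ → Pt → ℝ

/-- ℝ³-valued space-time functions. -/
abbrev STV : Type := ℝ → Pt → Fin 3 → ℝ

def pd (j : Fin 3) (f : Pt → ℝ) : Pt → ℝ :=
  fun x => fderiv ℝ f x (EuclideanSpace.single j 1)

/-- Time derivative ∂_t. -/
def Dt (f : STF) : STF := fun t x => deriv (fun s => f s x) t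

/-- Spatial derivative ∂_j. -/
def Dsp (j : Fin 3) (f : STF) : STF := fun t x => pd j (f t) x

/-- All space-time first derivatives ∂ = (∂_t, ∂₁, ∂₂, ∂₃). -/
def Dst : Fin 4 → STF → STF := ![Dt, Dsp 0, Dsp 1, Dsp 2]

/-- The wave operator ∂_t² − Δ. -/
def Box (f : STF) : STF := fun t x => Dt (Dt f) t x - ∑ j, Dsp j (Dsp j f) t x

/-- The rotation operators Ω = y ∧ ∇ : Ωᵢ = y_{i+1}∂_{i+2} − y_{i+2}∂_{i+1} (cyclic). -/
def Om (i : Fin 3) (f : STF) : STF :=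
  fun t x => x (i+1) * Dsp (i+2) f t x - x (i+2) * Dsp (i+1) f t x

/-- The scaling operator S = t∂_t + r∂_r = t∂_t + Σ_j y_j ∂_j. -/
def Sc (f : STF) : STF := fun t x => t * Dt f t x + ∑ j, x j * Dsp j f t x

/-- The matrices U₁, U₂, U₃. -/
def Umat : Fin 3 → Matrix (Fin 3) (Fin 3) ℝ :=
  ![!![0,0,0; 0,0,1; 0,-1,0], !![0,0,-1; 0,0,0; 1,0,0], !![0,1,0; -1,0,0; 0,0,0]]

/-- Componentwise application of a scalar operator to a vector field. -/
def mapc (T : STF → STF) (Y : STV) : STV := fun t x i => T (fun s y => Y s y i) t x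

/-- The modified rotations Ω̃ᵢY = ΩᵢY + UᵢY. -/
def OmT (i : Fin 3) (Y : STV) : STV :=
  fun t x j => Om i (fun s y => Y s y j) t x + ∑ k, Umat i j k * Y t x k

/-- The modified scaling S̃Y = (S − 1)Y. -/
def ScT (Y : STV) : STV := fun t x j => Sc (fun s y => Y s y j) t x - Y t x j

/-- The seven generators {∂_t, ∂₁, ∂₂, Ω̃₁, Ω̃₂, Ω̃₃, S̃} acting on vector fields. -/
def Gen : Fin 7 → STV → STV :=
  ![mapc Dt, mapc (Dsp 0), mapc (Dsp 1), OmT 0, OmT 1, OmT 2, ScT]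

/-- |∂W| : norm of the array of all first-order space-time derivatives of W. -/
def d1Norm (W : STV) (t : ℝ) (x : Pt) : ℝ :=
  Real.sqrt (∑ b : Fin 4, ∑ i, (Dst b (fun s y => W s y i) t x)^2)

/-!
Everything rests on Klainerman's identity, valid for any scalar C² function u:
  (t² − r²)Δu = t ∂_t S̃u − Σⱼ yⱼ∂ⱼS̃u − Σᵢ (y_{i+1}∂_{i+2} − y_{i+2}∂_{i+1})Ωᵢu
                − 2 Σⱼ yⱼ∂ⱼu − t²□u.
Since Su = Du·(t, y) and Ωᵢu = Du·ρᵢ(t, y) with ρᵢ linear, every term on the right is a value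
of the Hessian D²u on explicit vectors plus first-order terms. By symmetry of D²u the first two
terms give t²∂_t²u − Σ yⱼy_k∂ⱼ∂_ku, and by Lagrange's identity |y|²|ξ|² = (y·ξ)² + |y ∧ ξ|² the
rotation terms give r²Δu − Σ yⱼy_k∂ⱼ∂_ku up to first order. Each coefficient on the right is at
most t + r and each derivative is controlled by the right-hand side of the estimate (∂Ωᵢ by ∂Ω̃ᵢ
and ∂Y, as Uᵢ has order zero), so dividing by t + r > 0 gives the bound.
-/

open Function

section Calculus
variable {𝕜 E F : Type*} [NontriviallyNormedField 𝕜] [NormedAddCommGroup E] [NormedSpace 𝕜 E]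
  [NormedAddCommGroup F] [NormedSpace 𝕜 F]

theorem differentiable_fderiv_of_contDiff_two {u : E → F} (hu : ContDiff 𝕜 2 u) :
    Differentiable 𝕜 (fderiv 𝕜 u) :=
  (hu.fderiv_right (m := 1) le_rfl).differentiable one_ne_zero

theorem fderiv_fderiv_apply_clm {u : E → F} {p : E} (hu : DifferentiableAt 𝕜 (fderiv 𝕜 u) p)
    (L : E →L[𝕜] E) (w : E) :
    fderiv 𝕜 (fun q => fderiv 𝕜 u q (L q)) p w =
      fderiv 𝕜 (fderiv 𝕜 u) p w (L p) + fderiv 𝕜 u p (L w) := by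
  rw [fderiv_clm_apply hu L.differentiableAt, L.fderiv]
  simp [add_comm]

theorem fderiv_fderiv_apply_const {u : E → F} {p : E} (hu : DifferentiableAt 𝕜 (fderiv 𝕜 u) p)
    (v w : E) : fderiv 𝕜 (fun q => fderiv 𝕜 u q v) p w = fderiv 𝕜 (fderiv 𝕜 u) p w v := by
  rw [fderiv_clm_apply hu (differentiableAt_const v)]
  simp

theorem fderiv_fderiv_apply_self_sub {u : E → F} {p : E} (hu : DifferentiableAt 𝕜 u p)
    (hu' : DifferentiableAt 𝕜 (fderiv 𝕜 u) p) (w : E) :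
    fderiv 𝕜 (fun q => fderiv 𝕜 u q q - u q) p w = fderiv 𝕜 (fderiv 𝕜 u) p w p := by
  have hid : DifferentiableAt 𝕜 (fun q : E => q) p := differentiableAt_id
  rw [fderiv_fun_sub (hu'.clm_apply hid) hu, fderiv_clm_apply hu' hid]
  simp

end Calculus

def timeDir : ℝ × Pt := (1, 0)

def spaceDir (j : Fin 3) : ℝ × Pt := (0, EuclideanSpace.single j 1)

theorem eq_smul_timeDir_add_sum_smul_spaceDir (t : ℝ) (x : Pt) :
    ((t, x) : ℝ × Pt) = t • timeDir + ∑ j, x j • spaceDir j := by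
  refine Prod.ext (by simp [timeDir, spaceDir, Prod.fst_sum]) ?_
  simpa [timeDir, spaceDir, Prod.snd_sum, EuclideanSpace.basisFun_apply] using
    ((EuclideanSpace.basisFun (Fin 3) ℝ).sum_repr x).symm

def rotField (i : Fin 3) : ℝ × Pt →L[ℝ] ℝ × Pt :=
  ((EuclideanSpace.proj (i + 1)).comp (ContinuousLinearMap.snd ℝ ℝ Pt)).smulRight
      (spaceDir (i + 2)) -
    ((EuclideanSpace.proj (i + 2)).comp (ContinuousLinearMap.snd ℝ ℝ Pt)).smulRight
      (spaceDir (i + 1))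

theorem rotField_apply (i : Fin 3) (q : ℝ × Pt) :
    rotField i q = q.2 (i + 1) • spaceDir (i + 2) - q.2 (i + 2) • spaceDir (i + 1) := rfl

section Scalar
variable {f : STF} {t : ℝ} {x : Pt}

theorem Dt_eq_fderiv (hf : DifferentiableAt ℝ (uncurry f) (t, x)) :
    Dt f t x = fderiv ℝ (uncurry f) (t, x) timeDir := by
  have hpath : HasDerivAt (fun s : ℝ => ((s, x) : ℝ × Pt)) timeDir t :=
    (hasDerivAt_id t).prodMk (hasDerivAt_const t x)
  exact (hf.hasFDerivAt.comp_hasDerivAt t hpath).deriv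

theorem Dsp_eq_fderiv (hf : DifferentiableAt ℝ (uncurry f) (t, x)) (j : Fin 3) :
    Dsp j f t x = fderiv ℝ (uncurry f) (t, x) (spaceDir j) := by
  have hslice : HasFDerivAt (fun z : Pt => ((t, z) : ℝ × Pt)) (ContinuousLinearMap.inr ℝ ℝ Pt) x :=
    (hasFDerivAt_const t x).prodMk (hasFDerivAt_id x)
  exact congrArg (· (EuclideanSpace.single j 1)) (hf.hasFDerivAt.comp x hslice).fderiv

theorem uncurry_Dsp (hf : Differentiable ℝ (uncurry f)) (j : Fin 3) :
    uncurry (Dsp j f) = fun q => fderiv ℝ (uncurry f) q (spaceDir j) :=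
  funext fun q => Dsp_eq_fderiv (hf q) j

theorem uncurry_Dt (hf : Differentiable ℝ (uncurry f)) :
    uncurry (Dt f) = fun q => fderiv ℝ (uncurry f) q timeDir :=
  funext fun q => Dt_eq_fderiv (hf q)

theorem uncurry_Sc (hf : Differentiable ℝ (uncurry f)) :
    uncurry (Sc f) = fun q => fderiv ℝ (uncurry f) q q := by
  funext ⟨t, x⟩
  have hD := congrArg (fderiv ℝ (uncurry f) (t, x)) (eq_smul_timeDir_add_sum_smul_spaceDir t x)
  simp [uncurry, Sc, Dt_eq_fderiv (hf _), Dsp_eq_fderiv (hf _), hD]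

theorem uncurry_Om (hf : Differentiable ℝ (uncurry f)) (i : Fin 3) :
    uncurry (Om i f) = fun q => fderiv ℝ (uncurry f) q (rotField i q) := by
  funext ⟨t, x⟩
  simp [uncurry, Om, rotField_apply, Dsp_eq_fderiv (hf _)]

end Scalar

theorem klainerman_bilinear_identity (H : ℝ × Pt →L[ℝ] ℝ × Pt →L[ℝ] ℝ)
    (hH : ∀ v w, H v w = H w v) (D : ℝ × Pt →L[ℝ] ℝ) (t : ℝ) (y : Pt) :
    (t ^ 2 - ‖y‖ ^ 2) * ∑ j, H (spaceDir j) (spaceDir j) =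
      t * H timeDir (t, y) - ∑ j, y j * H (spaceDir j) (t, y)
      - (∑ i, y (i + 1) *
            (H (spaceDir (i + 2)) (rotField i (t, y)) + D (rotField i (spaceDir (i + 2))))
        - ∑ i, y (i + 2) *
            (H (spaceDir (i + 1)) (rotField i (t, y)) + D (rotField i (spaceDir (i + 1)))))
      - 2 * ∑ j, y j * D (spaceDir j)
      - t ^ 2 * (H timeDir timeDir - ∑ j, H (spaceDir j) (spaceDir j)) := by
  have hsd : ∀ j k : Fin 3, (spaceDir j).2 k = if k = j then 1 else 0 := fun j k => by
    simp [spaceDir, PiLp.single_apply]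
  have htd : ∀ k : Fin 3, timeDir.2 k = 0 := fun k => rfl
  rw [eq_smul_timeDir_add_sum_smul_spaceDir t y, EuclideanSpace.real_norm_sq_eq]
  simp only [Fin.sum_univ_three, rotField_apply, map_add, map_sub, map_smul, smul_eq_mul, htd, hsd,
    Fin.isValue, Fin.reduceAdd, Fin.reduceEq, ↓reduceIte]
  simp only [hH (spaceDir 1) (spaceDir 0), hH (spaceDir 2) (spaceDir 0),
    hH (spaceDir 2) (spaceDir 1), hH (spaceDir 0) timeDir, hH (spaceDir 1) timeDir,
    hH (spaceDir 2) timeDir]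
  ring

section SecondOrder
variable {f : STF} (hf : ContDiff ℝ 2 (uncurry f)) (t : ℝ) (x : Pt)
include hf

local notation "D" => fderiv ℝ (uncurry f) (t, x)
local notation "H" => fderiv ℝ (fderiv ℝ (uncurry f)) (t, x)

theorem Dsp_Dsp_eq (j k : Fin 3) : Dsp j (Dsp k f) t x = H (spaceDir j) (spaceDir k) := by
  have h1 := hf.differentiable two_ne_zero
  have h2 := differentiable_fderiv_of_contDiff_two hf
  rw [Dsp_eq_fderiv (by rw [uncurry_Dsp h1]; exact (h2 _).clm_apply (differentiableAt_const _)),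
    uncurry_Dsp h1, fderiv_fderiv_apply_const (h2 _)]

theorem Dt_Dt_eq : Dt (Dt f) t x = H timeDir timeDir := by
  have h1 := hf.differentiable two_ne_zero
  have h2 := differentiable_fderiv_of_contDiff_two hf
  rw [Dt_eq_fderiv (by rw [uncurry_Dt h1]; exact (h2 _).clm_apply (differentiableAt_const _)),
    uncurry_Dt h1, fderiv_fderiv_apply_const (h2 _)]

theorem Box_eq : Box f t x = H timeDir timeDir - ∑ j, H (spaceDir j) (spaceDir j) := by
  simp only [Box, Dt_Dt_eq hf, Dsp_Dsp_eq hf]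

theorem uncurry_Sc_sub :
    uncurry (fun s z => Sc f s z - f s z) = fun q => fderiv ℝ (uncurry f) q q - uncurry f q :=
  funext fun q => congrArg (· - f q.1 q.2) (congrFun (uncurry_Sc (hf.differentiable two_ne_zero)) q)

theorem Dt_Sc_sub_eq : Dt (fun s z => Sc f s z - f s z) t x = H timeDir (t, x) := by
  have h1 := hf.differentiable two_ne_zero
  have h2 := differentiable_fderiv_of_contDiff_two hf
  rw [Dt_eq_fderiv (by
      rw [uncurry_Sc_sub hf]; exact ((h2 _).clm_apply differentiableAt_id).sub (h1 _)),
    uncurry_Sc_sub hf, fderiv_fderiv_apply_self_sub (h1 _) (h2 _)]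

theorem Dsp_Sc_sub_eq (j : Fin 3) :
    Dsp j (fun s z => Sc f s z - f s z) t x = H (spaceDir j) (t, x) := by
  have h1 := hf.differentiable two_ne_zero
  have h2 := differentiable_fderiv_of_contDiff_two hf
  rw [Dsp_eq_fderiv (by
      rw [uncurry_Sc_sub hf]; exact ((h2 _).clm_apply differentiableAt_id).sub (h1 _)),
    uncurry_Sc_sub hf, fderiv_fderiv_apply_self_sub (h1 _) (h2 _)]

theorem Dsp_Om_eq (i k : Fin 3) :
    Dsp k (Om i f) t x = H (spaceDir k) (rotField i (t, x)) + D (rotField i (spaceDir k)) := by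
  have h1 := hf.differentiable two_ne_zero
  have h2 := differentiable_fderiv_of_contDiff_two hf
  rw [Dsp_eq_fderiv (by rw [uncurry_Om h1]; exact (h2 _).clm_apply (rotField i).differentiableAt),
    uncurry_Om h1, fderiv_fderiv_apply_clm (h2 _)]

theorem klainerman_identity :
    (t ^ 2 - ‖x‖ ^ 2) * ∑ j, Dsp j (Dsp j f) t x =
      t * Dt (fun s z => Sc f s z - f s z) t x - ∑ j, x j * Dsp j (fun s z => Sc f s z - f s z) t x
      - (∑ i, x (i + 1) * Dsp (i + 2) (Om i f) t x - ∑ i, x (i + 2) * Dsp (i + 1) (Om i f) t x)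
      - 2 * ∑ j, x j * Dsp j f t x - t ^ 2 * Box f t x := by
  have hH : ∀ v w, H v w = H w v := fun v w =>
    (hf.contDiffAt.isSymmSndFDerivAt (by simp [minSmoothness_of_isRCLikeNormedField])).eq v w
  simp only [Dsp_Dsp_eq hf, Dt_Sc_sub_eq hf, Dsp_Sc_sub_eq hf, Dsp_Om_eq hf, Box_eq hf,
    Dsp_eq_fderiv ((hf.differentiable two_ne_zero) _)]
  exact klainerman_bilinear_identity H hH D t x

end SecondOrder

theorem sqrt_sum_sq_le_sum_abs {ι : Type*} (s : Finset ι) (a : ι → ℝ) :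
    √(∑ i ∈ s, a i ^ 2) ≤ ∑ i ∈ s, |a i| := by
  refine Real.sqrt_le_iff.mpr ⟨Finset.sum_nonneg fun i _ => abs_nonneg _, ?_⟩
  simpa only [sq_abs] using
    Finset.sum_sq_le_sq_sum_of_nonneg (f := fun i => |a i|) fun i _ => abs_nonneg _

theorem abs_sum_mul_le {ι : Type*} [Fintype ι] {a b : ι → ℝ} {R K : ℝ} (ha : ∀ i, |a i| ≤ R)
    (hb : ∀ i, |b i| ≤ K) : |∑ i, a i * b i| ≤ Fintype.card ι * (R * K) := by
  refine (Finset.abs_sum_le_sum_abs _ _).trans ?_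
  simpa [abs_mul] using Finset.sum_le_card_nsmul Finset.univ _ (R * K) fun i _ =>
    mul_le_mul (ha i) (hb i) (abs_nonneg _) ((abs_nonneg _).trans (ha i))

theorem abs_sum_Umat_mul_le (i c : Fin 3) {g : Fin 3 → ℝ} {K : ℝ} (hg : ∀ l, |g l| ≤ K) :
    |∑ l, Umat i c l * g l| ≤ K := by
  have hK : 0 ≤ K := (abs_nonneg _).trans (hg 0)
  fin_cases i <;> fin_cases c <;> simp [Umat, Fin.sum_univ_three, hK, hg]

theorem abs_Dst_le_d1Norm (W : STV) (t : ℝ) (x : Pt) (b : Fin 4) (c : Fin 3) :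
    |Dst b (fun s z => W s z c) t x| ≤ d1Norm W t x :=
  Real.abs_le_sqrt <| (Finset.single_le_sum (fun c _ => sq_nonneg (Dst b (fun s z => W s z c) t x))
    (Finset.mem_univ c)).trans <|
      Finset.single_le_sum (f := fun b => ∑ c, (Dst b (fun s z => W s z c) t x) ^ 2)
        (fun _ _ => Finset.sum_nonneg fun _ _ => sq_nonneg _) (Finset.mem_univ b)

theorem abs_Dt_le_d1Norm (W : STV) (t : ℝ) (x : Pt) (c : Fin 3) :
    |Dt (fun s z => W s z c) t x| ≤ d1Norm W t x :=
  abs_Dst_le_d1Norm W t x 0 c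

theorem abs_Dsp_le_d1Norm (W : STV) (t : ℝ) (x : Pt) (j c : Fin 3) :
    |Dsp j (fun s z => W s z c) t x| ≤ d1Norm W t x := by
  have hj : Dst j.succ = Dsp j := by fin_cases j <;> rfl
  simpa only [hj] using abs_Dst_le_d1Norm W t x j.succ c

theorem abs_Box_le (Y : STV) (t : ℝ) (x : Pt) (c : Fin 3) :
    |Box (fun s z => Y s z c) t x| ≤ √(∑ i, Box (fun s z => Y s z i) t x ^ 2) :=
  Real.abs_le_sqrt <| Finset.single_le_sum (f := fun i => Box (fun s z => Y s z i) t x ^ 2)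
    (fun _ _ => sq_nonneg _) (Finset.mem_univ c)

theorem Dsp_OmT {Y : STV} (hY : ∀ c, ContDiff ℝ 2 (uncurry fun s z => Y s z c)) (i c k : Fin 3)
    (t : ℝ) (x : Pt) :
    Dsp k (fun s z => OmT i Y s z c) t x =
      Dsp k (Om i fun s z => Y s z c) t x + ∑ l, Umat i c l * Dsp k (fun s z => Y s z l) t x := by
  have h1 := fun l => (hY l).differentiable two_ne_zero
  have hOm : Differentiable ℝ (uncurry (Om i fun s z => Y s z c)) := by
    rw [uncurry_Om (h1 c)]
    exact fun q =>
      (differentiable_fderiv_of_contDiff_two (hY c) q).clm_apply (rotField i).differentiableAt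
  have hsplit : uncurry (fun s z => OmT i Y s z c) =
      fun q => uncurry (Om i fun s z => Y s z c) q +
        ∑ l, Umat i c l * uncurry (fun s z => Y s z l) q :=
    rfl
  have hU : Differentiable ℝ fun q => ∑ l, Umat i c l * uncurry (fun s z => Y s z l) q :=
    Differentiable.fun_sum fun l _ => (h1 l).const_mul _
  rw [Dsp_eq_fderiv (hsplit ▸ (hOm.add hU) _), Dsp_eq_fderiv (hOm _), hsplit,
    fderiv_fun_add (hOm _) (hU _), fderiv_fun_sum fun l _ => ((h1 l).const_mul _) _]
  simp [Dsp_eq_fderiv ((h1 _) _), fderiv_const_mul ((h1 _) _)]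

theorem abs_sub_norm_mul_abs_laplacian_le {Y : STV}
    (hY : ∀ c, ContDiff ℝ 2 (uncurry fun s z => Y s z c)) {t : ℝ} {y : Pt} (ht : 0 ≤ t)
    (hy : 0 < ‖y‖) {K : ℝ} (hS : d1Norm (ScT Y) t y ≤ K) (hΩ : ∀ i, d1Norm (OmT i Y) t y ≤ K)
    (hD : d1Norm Y t y ≤ K) (hBox : t * √(∑ i, Box (fun s z => Y s z i) t y ^ 2) ≤ K)
    (c : Fin 3) :
    |t - ‖y‖| * |∑ j, Dsp j (Dsp j fun s z => Y s z c) t y| ≤ 23 * K := by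
  set R := t + ‖y‖
  have hR : 0 < R := by positivity
  have htR : |t| ≤ R := by rw [abs_of_nonneg ht]; linarith
  have hyR : ∀ j, |y j| ≤ R := fun j => (PiLp.norm_apply_le y j).trans (by linarith)
  have hσ0 : |Dt (fun s z => Sc (fun s z => Y s z c) s z - Y s z c) t y| ≤ K :=
    (abs_Dt_le_d1Norm _ t y c).trans hS
  have hσ : ∀ j, |Dsp j (fun s z => Sc (fun s z => Y s z c) s z - Y s z c) t y| ≤ K :=
    fun j => (abs_Dsp_le_d1Norm _ t y j c).trans hS
  have hDc : ∀ j, |Dsp j (fun s z => Y s z c) t y| ≤ K :=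
    fun j => (abs_Dsp_le_d1Norm Y t y j c).trans hD
  have hω : ∀ i k, |Dsp k (Om i fun s z => Y s z c) t y| ≤ 2 * K := fun i k => by
    rw [eq_sub_of_add_eq (Dsp_OmT hY i c k t y).symm, two_mul]
    exact (abs_sub _ _).trans (add_le_add ((abs_Dsp_le_d1Norm _ t y k c).trans (hΩ i))
      (abs_sum_Umat_mul_le i c fun l => (abs_Dsp_le_d1Norm Y t y k l).trans hD))
  have hβ : |t ^ 2 * Box (fun s z => Y s z c) t y| ≤ R * K := by
    rw [pow_two, mul_assoc, abs_mul, abs_mul, abs_of_nonneg ht]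
    exact mul_le_mul (by linarith) ((mul_le_mul_of_nonneg_left (abs_Box_le Y t y c) ht).trans hBox)
      (by positivity) hR.le
  have h1 := abs_le.mp
    (show |t * Dt (fun s z => Sc (fun s z => Y s z c) s z - Y s z c) t y| ≤ R * K by
      rw [abs_mul]; exact mul_le_mul htR hσ0 (abs_nonneg _) hR.le)
  have h2 := abs_le.mp (abs_sum_mul_le hyR hσ)
  have h3 := abs_le.mp (abs_sum_mul_le (fun i => hyR (i + 1)) fun i => hω i (i + 2))
  have h4 := abs_le.mp (abs_sum_mul_le (fun i => hyR (i + 2)) fun i => hω i (i + 1))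
  have h5 := abs_le.mp (abs_sum_mul_le hyR hDc)
  have h6 := abs_le.mp hβ
  simp only [Fintype.card_fin, Nat.cast_ofNat] at h2 h3 h4 h5
  have hfactor : |t - ‖y‖| * |∑ j, Dsp j (Dsp j fun s z => Y s z c) t y| * R =
      |(t ^ 2 - ‖y‖ ^ 2) * ∑ j, Dsp j (Dsp j fun s z => Y s z c) t y| := by
    rw [abs_mul, show t ^ 2 - ‖y‖ ^ 2 = (t - ‖y‖) * R by ring, abs_mul, abs_of_pos hR]
    ring
  refine le_of_mul_le_mul_right ?_ hR
  rw [hfactor, klainerman_identity (hY c)]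
  exact abs_le.mpr ⟨by linarith, by linarith⟩

theorem OmT_mem_range_Gen (i : Fin 3) : ∃ z, Gen z = OmT i := by
  fin_cases i
  exacts [⟨3, rfl⟩, ⟨4, rfl⟩, ⟨5, rfl⟩]

theorem weighted_laplacian_estimate :
    ∃ C : ℝ, 0 < C ∧
      ∀ Y : STV,
        (∀ i, ContDiff ℝ (⊤ : ℕ∞) fun q : ℝ × Pt => Y q.1 q.2 i) →
        ∀ (t : ℝ) (y : Pt), 0 ≤ t → 0 < ‖y‖ →
          |t - ‖y‖| * Real.sqrt (∑ i, ((∑ j, Dsp j (Dsp j (fun s z => Y s z i)) t y))^2) ≤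
            C * ((∑ z : Fin 7, d1Norm (Gen z Y) t y) + d1Norm Y t y
                + t * Real.sqrt (∑ i, (Box (fun s z => Y s z i) t y)^2)) := by
  refine ⟨69, by norm_num, fun Y hY t y ht hy => ?_⟩
  have hY2 : ∀ c, ContDiff ℝ 2 (uncurry fun s z => Y s z c) :=
    fun c => (hY c).of_le (WithTop.coe_le_coe.mpr le_top)
  set K := (∑ z : Fin 7, d1Norm (Gen z Y) t y) + d1Norm Y t y
    + t * √(∑ i, (Box (fun s z => Y s z i) t y) ^ 2)
  have hGen : ∀ z, d1Norm (Gen z Y) t y ≤ ∑ z, d1Norm (Gen z Y) t y := fun z =>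
    Finset.single_le_sum (f := fun z => d1Norm (Gen z Y) t y) (fun z _ => Real.sqrt_nonneg _)
      (Finset.mem_univ z)
  have hD : 0 ≤ d1Norm Y t y := Real.sqrt_nonneg _
  have hBox : 0 ≤ t * √(∑ i, (Box (fun s z => Y s z i) t y) ^ 2) := by positivity
  have hsum : 0 ≤ ∑ z, d1Norm (Gen z Y) t y := Finset.sum_nonneg fun z _ => Real.sqrt_nonneg _
  have hS : d1Norm (ScT Y) t y ≤ K := by linarith [show d1Norm (ScT Y) t y ≤ _ from hGen 6]
  have hΩ : ∀ i, d1Norm (OmT i Y) t y ≤ K := fun i => by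
    obtain ⟨z, hz⟩ := OmT_mem_range_Gen i
    linarith [hz ▸ hGen z]
  calc |t - ‖y‖| * √(∑ i, (∑ j, Dsp j (Dsp j fun s z => Y s z i) t y) ^ 2)
      ≤ |t - ‖y‖| * ∑ i, |∑ j, Dsp j (Dsp j fun s z => Y s z i) t y| := by
        gcongr; exact sqrt_sum_sq_le_sum_abs _ _
    _ = ∑ i, |t - ‖y‖| * |∑ j, Dsp j (Dsp j fun s z => Y s z i) t y| := Finset.mul_sum _ _ _
    _ ≤ ∑ _i : Fin 3, 23 * K := Finset.sum_le_sum fun c _ =>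
        abs_sub_norm_mul_abs_laplacian_le hY2 ht hy hS hΩ (by linarith) (by linarith) c
    _ = 69 * K := by rw [Finset.sum_const, Finset.card_fin, nsmul_eq_mul]; ring

end Stmt14
end
end

section
/- Let (Y, p) be smooth on an open subset of ℝ × ℝ³, with Y ℝ³-valued and p scalar, satisfying the elastodynamic equation ∂_t²Y − ΔY = −∇p − (∇Y)^⊤(∂_t² − Δ)Y. Then, with S = t∂_t + r∂_r and S̃Y = (S − 1)Y: (∂_t² − Δ)(S̃Y) = −(∇S̃Y)^⊤(∂_t² − Δ)Y − (∇Y)^⊤(∂_t² − Δ)(S̃Y) − ∇(S p). -/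
/-!
Lift everything to functions on `ℝ × ℝ³`: there `∂_t` and `∂_j` are directional derivatives and
the scaling field `S` is the Euler operator `F ↦ DF(q) q`. Differentiating `DF(q) q` in a
direction `v` and using the symmetry of the second derivative gives `[∂_v, S] = ∂_v`; hence
`∂_j S̃ = S ∂_j`, `[□, S] = 2□` and `□ S̃ = (S + 1) □`. Applying the derivation `S` to the
equation and substituting these relations leaves `□Y_j + ∂_j p + Σ_k ∂_jY_k □Y_k`, which
vanishes by the equation itself.
-/

noncomputable section

namespace Stmt19

abbrev Pt : Type := EuclideanSpace ℝ (Fin 3)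

/-- Scalar space-time functions. -/
abbrev STF : Type := ℝ → Pt → ℝ

/-- ℝ³-valued space-time functions. -/
abbrev STV : Type := ℝ → Pt → Fin 3 → ℝ

def pd (j : Fin 3) (f : Pt → ℝ) : Pt → ℝ :=
  fun x => fderiv ℝ f x (EuclideanSpace.single j 1)

/-- Time derivative ∂_t. -/
def Dt (f : STF) : STF := fun t x => deriv (fun s => f s x) t

/-- Spatial derivative ∂_j. -/
def Dsp (j : Fin 3) (f : STF) : STF := fun t x => pd j (f t) x

/-- All space-time first derivatives ∂ = (∂_t, ∂₁, ∂₂, ∂₃). -/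
def Dst : Fin 4 → STF → STF := ![Dt, Dsp 0, Dsp 1, Dsp 2]

/-- The wave operator ∂_t² − Δ. -/
def Box (f : STF) : STF := fun t x => Dt (Dt f) t x - ∑ j, Dsp j (Dsp j f) t x

/-- The rotation operators Ω = y ∧ ∇ : Ωᵢ = y_{i+1}∂_{i+2} − y_{i+2}∂_{i+1} (cyclic). -/
def Om (i : Fin 3) (f : STF) : STF :=
  fun t x => x (i+1) * Dsp (i+2) f t x - x (i+2) * Dsp (i+1) f t x

/-- The scaling operator S = t∂_t + r∂_r = t∂_t + Σ_j y_j ∂_j. -/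
def Sc (f : STF) : STF := fun t x => t * Dt f t x + ∑ j, x j * Dsp j f t x

/-- The matrices U₁, U₂, U₃. -/
def Umat : Fin 3 → Matrix (Fin 3) (Fin 3) ℝ :=
  ![!![0,0,0; 0,0,1; 0,-1,0], !![0,0,-1; 0,0,0; 1,0,0], !![0,1,0; -1,0,0; 0,0,0]]

/-- Componentwise application of a scalar operator to a vector field. -/
def mapc (T : STF → STF) (Y : STV) : STV := fun t x i => T (fun s y => Y s y i) t x

/-- The modified rotations Ω̃ᵢY = ΩᵢY + UᵢY. -/
def OmT (i : Fin 3) (Y : STV) : STV :=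
  fun t x j => Om i (fun s y => Y s y j) t x + ∑ k, Umat i j k * Y t x k

/-- The modified scaling S̃Y = (S − 1)Y. -/
def ScT (Y : STV) : STV := fun t x j => Sc (fun s y => Y s y j) t x - Y t x j

/-- The seven generators {∂_t, ∂₁, ∂₂, Ω̃₁, Ω̃₂, Ω̃₃, S̃} acting on vector fields. -/
def Gen : Fin 7 → STV → STV :=
  ![mapc Dt, mapc (Dsp 0), mapc (Dsp 1), OmT 0, OmT 1, OmT 2, ScT]

open Set Filter Topology
open scoped ContDiff

section DirectionalDerivative

variable {E : Type*} [NormedAddCommGroup E] [NormedSpace ℝ E]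

def dirDeriv (v : E) (F : E → ℝ) : E → ℝ := fun q => fderiv ℝ F q v

/-- The Euler operator `q · ∇`: on `ℝ × ℝ³` it is the scaling field `S = t∂_t + r∂_r`. -/
def euler (F : E → ℝ) : E → ℝ := fun q => fderiv ℝ F q q

variable {U : Set E} {F G : E → ℝ} {q : E}

theorem dirDeriv_add (hF : DifferentiableAt ℝ F q) (hG : DifferentiableAt ℝ G q) (v : E) :
    dirDeriv v (fun x => F x + G x) q = dirDeriv v F q + dirDeriv v G q := by
  simp [dirDeriv, fderiv_fun_add hF hG]

theorem dirDeriv_sub (hF : DifferentiableAt ℝ F q) (hG : DifferentiableAt ℝ G q) (v : E) :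
    dirDeriv v (fun x => F x - G x) q = dirDeriv v F q - dirDeriv v G q := by
  simp [dirDeriv, fderiv_fun_sub hF hG]

theorem dirDeriv_neg (v : E) : dirDeriv v (fun x => -F x) q = -dirDeriv v F q := by
  simp [dirDeriv]

theorem dirDeriv_mul (hF : DifferentiableAt ℝ F q) (hG : DifferentiableAt ℝ G q) (v : E) :
    dirDeriv v (fun x => F x * G x) q = dirDeriv v F q * G q + F q * dirDeriv v G q := by
  simp only [dirDeriv, fderiv_fun_mul hF hG, add_apply, smul_apply, smul_eq_mul]
  ring

theorem dirDeriv_sum {ι : Type*} {s : Finset ι} {F : ι → E → ℝ}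
    (hF : ∀ i ∈ s, DifferentiableAt ℝ (F i) q) (v : E) :
    dirDeriv v (fun x => ∑ i ∈ s, F i x) q = ∑ i ∈ s, dirDeriv v (F i) q := by
  simp [dirDeriv, fderiv_fun_sum hF]

theorem _root_.Filter.EventuallyEq.dirDeriv_eq (h : F =ᶠ[𝓝 q] G) (v : E) :
    dirDeriv v F q = dirDeriv v G q := by
  simp only [dirDeriv, h.fderiv_eq]

theorem _root_.Filter.EventuallyEq.euler_eq (h : F =ᶠ[𝓝 q] G) : euler F q = euler G q :=
  h.dirDeriv_eq q

theorem _root_.ContDiffOn.differentiableAt_of_isOpen (hF : ContDiffOn ℝ ∞ F U) (hU : IsOpen U)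
    (hq : q ∈ U) : DifferentiableAt ℝ F q :=
  (hF.contDiffAt (hU.mem_nhds hq)).differentiableAt (by simp)

theorem _root_.ContDiffOn.dirDeriv (hF : ContDiffOn ℝ ∞ F U) (hU : IsOpen U) (v : E) :
    ContDiffOn ℝ ∞ (dirDeriv v F) U :=
  (hF.fderiv_of_isOpen hU (m := ∞) le_rfl).clm_apply contDiffOn_const

theorem _root_.ContDiffOn.euler (hF : ContDiffOn ℝ ∞ F U) (hU : IsOpen U) :
    ContDiffOn ℝ ∞ (euler F) U :=
  (hF.fderiv_of_isOpen hU (m := ∞) le_rfl).clm_apply contDiffOn_id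

theorem fderiv_dirDeriv_apply (hF : DifferentiableAt ℝ (fderiv ℝ F) q) (v w : E) :
    fderiv ℝ (dirDeriv v F) q w = fderiv ℝ (fderiv ℝ F) q w v := by
  change fderiv ℝ (fun x => fderiv ℝ F x v) q w = _
  rw [fderiv_clm_apply hF (differentiableAt_const v)]
  simp

theorem dirDeriv_euler (hF : ContDiffOn ℝ ∞ F U) (hU : IsOpen U) (hq : q ∈ U) (v : E) :
    dirDeriv v (euler F) q = euler (dirDeriv v F) q + dirDeriv v F q := by
  have hFq : ContDiffAt ℝ ∞ F q := hF.contDiffAt (hU.mem_nhds hq)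
  have hF' : DifferentiableAt ℝ (fderiv ℝ F) q :=
    (hFq.fderiv_right (m := ∞) le_rfl).differentiableAt (by simp)
  have hsymm : IsSymmSndFDerivAt ℝ F q := hFq.isSymmSndFDerivAt (by simp; norm_cast)
  change fderiv ℝ (fun x => fderiv ℝ F x (id x)) q v = fderiv ℝ (dirDeriv v F) q q + fderiv ℝ F q v
  rw [fderiv_clm_apply hF' differentiableAt_id, fderiv_dirDeriv_apply hF', hsymm]
  simp [add_comm]

theorem euler_sub (hF : DifferentiableAt ℝ F q) (hG : DifferentiableAt ℝ G q) :
    euler (fun x => F x - G x) q = euler F q - euler G q :=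
  dirDeriv_sub hF hG q

theorem euler_neg : euler (fun x => -F x) q = -euler F q :=
  dirDeriv_neg q

theorem euler_mul (hF : DifferentiableAt ℝ F q) (hG : DifferentiableAt ℝ G q) :
    euler (fun x => F x * G x) q = euler F q * G q + F q * euler G q :=
  dirDeriv_mul hF hG q

theorem euler_sum {ι : Type*} {s : Finset ι} {F : ι → E → ℝ}
    (hF : ∀ i ∈ s, DifferentiableAt ℝ (F i) q) :
    euler (fun x => ∑ i ∈ s, F i x) q = ∑ i ∈ s, euler (F i) q :=
  dirDeriv_sum hF q

def modEuler (F : E → ℝ) : E → ℝ := fun q => euler F q - F q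

theorem _root_.ContDiffOn.modEuler (hF : ContDiffOn ℝ ∞ F U) (hU : IsOpen U) :
    ContDiffOn ℝ ∞ (modEuler F) U :=
  (hF.euler hU).sub hF

theorem dirDeriv_modEuler (hF : ContDiffOn ℝ ∞ F U) (hU : IsOpen U) (hq : q ∈ U) (v : E) :
    dirDeriv v (modEuler F) q = euler (dirDeriv v F) q := by
  unfold modEuler
  rw [dirDeriv_sub ((hF.euler hU).differentiableAt_of_isOpen hU hq)
    (hF.differentiableAt_of_isOpen hU hq), dirDeriv_euler hF hU hq, add_sub_cancel_right]

theorem dirDeriv_dirDeriv_euler (hF : ContDiffOn ℝ ∞ F U) (hU : IsOpen U) (hq : q ∈ U)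
    (v w : E) :
    dirDeriv v (dirDeriv w (euler F)) q =
      euler (dirDeriv v (dirDeriv w F)) q + 2 * dirDeriv v (dirDeriv w F) q := by
  have hFw := hF.dirDeriv hU w
  have hloc : dirDeriv w (euler F) =ᶠ[𝓝 q] fun x => euler (dirDeriv w F) x + dirDeriv w F x :=
    eventually_of_mem (hU.mem_nhds hq) fun x hx => dirDeriv_euler hF hU hx w
  rw [hloc.dirDeriv_eq, dirDeriv_add ((hFw.euler hU).differentiableAt_of_isOpen hU hq)
    (hFw.differentiableAt_of_isOpen hU hq), dirDeriv_euler hFw hU hq]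
  ring

end DirectionalDerivative

section Spacetime

variable {ι : Type*} [Fintype ι] [DecidableEq ι]

def timeDir : ℝ × EuclideanSpace ℝ ι := (1, 0)

def spaceDir (j : ι) : ℝ × EuclideanSpace ℝ ι := (0, EuclideanSpace.single j 1)

def wave (F : ℝ × EuclideanSpace ℝ ι → ℝ) : ℝ × EuclideanSpace ℝ ι → ℝ := fun q =>
  dirDeriv timeDir (dirDeriv timeDir F) q - ∑ j, dirDeriv (spaceDir j) (dirDeriv (spaceDir j) F) q

variable {U : Set (ℝ × EuclideanSpace ℝ ι)} {F G : ℝ × EuclideanSpace ℝ ι → ℝ}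
  {q : ℝ × EuclideanSpace ℝ ι}

theorem euler_eq_scaling (F : ℝ × EuclideanSpace ℝ ι → ℝ) (q : ℝ × EuclideanSpace ℝ ι) :
    euler F q = q.1 * dirDeriv timeDir F q + ∑ j, q.2 j * dirDeriv (spaceDir j) F q := by
  have hq : q = q.1 • timeDir + ∑ j, q.2 j • spaceDir j := by
    ext j
    · simp [timeDir, spaceDir, Prod.fst_sum]
    · simp [timeDir, spaceDir, Prod.snd_sum, Pi.single_apply]
  calc euler F q = fderiv ℝ F q (q.1 • timeDir + ∑ j, q.2 j • spaceDir j) :=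
        congrArg (fderiv ℝ F q) hq
    _ = _ := by simp [dirDeriv]

theorem _root_.ContDiffOn.wave (hF : ContDiffOn ℝ ∞ F U) (hU : IsOpen U) :
    ContDiffOn ℝ ∞ (wave F) U :=
  (((hF.dirDeriv hU _).dirDeriv hU _).sub
    (ContDiffOn.sum fun _ _ => (hF.dirDeriv hU _).dirDeriv hU _))

theorem wave_sub (hF : ContDiffOn ℝ ∞ F U) (hG : ContDiffOn ℝ ∞ G U) (hU : IsOpen U)
    (hq : q ∈ U) : wave (fun x => F x - G x) q = wave F q - wave G q := by
  have hsub : ∀ v, dirDeriv v (dirDeriv v fun x => F x - G x) q =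
      dirDeriv v (dirDeriv v F) q - dirDeriv v (dirDeriv v G) q := by
    intro v
    have hloc : dirDeriv v (fun x => F x - G x) =ᶠ[𝓝 q]
        fun x => dirDeriv v F x - dirDeriv v G x :=
      eventually_of_mem (hU.mem_nhds hq) fun x hx =>
        dirDeriv_sub (hF.differentiableAt_of_isOpen hU hx) (hG.differentiableAt_of_isOpen hU hx) v
    rw [hloc.dirDeriv_eq, dirDeriv_sub ((hF.dirDeriv hU v).differentiableAt_of_isOpen hU hq)
      ((hG.dirDeriv hU v).differentiableAt_of_isOpen hU hq)]
  simp only [wave, hsub, Finset.sum_sub_distrib]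
  ring

theorem wave_euler (hF : ContDiffOn ℝ ∞ F U) (hU : IsOpen U) (hq : q ∈ U) :
    wave (euler F) q = euler (wave F) q + 2 * wave F q := by
  have hF2 : ∀ v w, ContDiffOn ℝ ∞ (dirDeriv v (dirDeriv w F)) U :=
    fun v w => (hF.dirDeriv hU w).dirDeriv hU v
  unfold wave
  rw [euler_sub ((hF2 _ _).differentiableAt_of_isOpen hU hq)
      (DifferentiableAt.fun_sum fun j _ => (hF2 _ _).differentiableAt_of_isOpen hU hq),
    euler_sum fun j _ => (hF2 _ _).differentiableAt_of_isOpen hU hq]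
  simp only [dirDeriv_dirDeriv_euler hF hU hq, Finset.sum_add_distrib, mul_sub, Finset.mul_sum]
  ring

theorem wave_modEuler (hF : ContDiffOn ℝ ∞ F U) (hU : IsOpen U) (hq : q ∈ U) :
    wave (modEuler F) q = euler (wave F) q + wave F q := by
  unfold modEuler
  rw [wave_sub (hF.euler hU) hF hU hq, wave_euler hF hU hq]
  ring

theorem wave_modEuler_of_elastodynamic {F : ι → ℝ × EuclideanSpace ℝ ι → ℝ}
    {P : ℝ × EuclideanSpace ℝ ι → ℝ} (hU : IsOpen U) (hF : ∀ k, ContDiffOn ℝ ∞ (F k) U)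
    (hP : ContDiffOn ℝ ∞ P U)
    (heq : ∀ x ∈ U, ∀ i, wave (F i) x =
      -dirDeriv (spaceDir i) P x - ∑ k, dirDeriv (spaceDir i) (F k) x * wave (F k) x)
    (hq : q ∈ U) (j : ι) :
    wave (modEuler (F j)) q =
      -(∑ k, dirDeriv (spaceDir j) (modEuler (F k)) q * wave (F k) q)
        - (∑ k, dirDeriv (spaceDir j) (F k) q * wave (modEuler (F k)) q)
        - dirDeriv (spaceDir j) (euler P) q := by
  have hd {G : ℝ × EuclideanSpace ℝ ι → ℝ} (hG : ContDiffOn ℝ ∞ G U) : DifferentiableAt ℝ G q :=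
    hG.differentiableAt_of_isOpen hU hq
  have hDF k := (hF k).dirDeriv hU (spaceDir j)
  have hDP := hP.dirDeriv hU (spaceDir j)
  have heuler_eq : euler (wave (F j)) q = -euler (dirDeriv (spaceDir j) P) q -
      ∑ k, (euler (dirDeriv (spaceDir j) (F k)) q * wave (F k) q +
        dirDeriv (spaceDir j) (F k) q * euler (wave (F k)) q) := by
    have hloc := EqOn.eventuallyEq_of_mem (fun x hx => heq x hx j) (hU.mem_nhds hq)
    rw [hloc.euler_eq, euler_sub (hd hDP).fun_neg
      (DifferentiableAt.fun_sum fun k _ => (hd (hDF k)).fun_mul (hd ((hF k).wave hU))), euler_neg,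
      euler_sum fun k _ => (hd (hDF k)).fun_mul (hd ((hF k).wave hU))]
    congr 1
    exact Finset.sum_congr rfl fun k _ => euler_mul (hd (hDF k)) (hd ((hF k).wave hU))
  rw [wave_modEuler (hF j) hU hq, heuler_eq, heq q hq j, dirDeriv_euler hP hU hq]
  simp only [dirDeriv_modEuler (hF _) hU hq, wave_modEuler (hF _) hU hq, mul_add,
    Finset.sum_add_distrib]
  ring

end Spacetime

section Transfer

variable {U : Set (ℝ × Pt)} {f : STF} {G : ℝ × Pt → ℝ}

theorem Dt_eq_dirDeriv {q : ℝ × Pt} (hf : DifferentiableAt ℝ (fun x : ℝ × Pt => f x.1 x.2) q) :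
    Dt f q.1 q.2 = dirDeriv timeDir (fun x : ℝ × Pt => f x.1 x.2) q := by
  have hline : HasDerivAt (fun s : ℝ => ((s, q.2) : ℝ × Pt)) timeDir q.1 :=
    (hasDerivAt_id q.1).prodMk (hasDerivAt_const q.1 q.2)
  exact (hf.hasFDerivAt.comp_hasDerivAt q.1 hline).deriv

theorem Dsp_eq_dirDeriv {q : ℝ × Pt} (hf : DifferentiableAt ℝ (fun x : ℝ × Pt => f x.1 x.2) q)
    (j : Fin 3) : Dsp j f q.1 q.2 = dirDeriv (spaceDir j) (fun x : ℝ × Pt => f x.1 x.2) q := by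
  have hslice : HasFDerivAt (fun y : Pt => ((q.1, y) : ℝ × Pt))
      ((0 : Pt →L[ℝ] ℝ).prod (ContinuousLinearMap.id ℝ Pt)) q.2 :=
    (hasFDerivAt_const q.1 q.2).prodMk (hasFDerivAt_id q.2)
  change fderiv ℝ ((fun x : ℝ × Pt => f x.1 x.2) ∘ fun y => (q.1, y)) q.2
    (EuclideanSpace.single j 1) = _
  rw [(hf.hasFDerivAt.comp q.2 hslice).fderiv]
  rfl

theorem Dt_eq_dirDeriv_of_eqOn (hU : IsOpen U) (hG : ContDiffOn ℝ ∞ G U)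
    (hfG : ∀ x ∈ U, f x.1 x.2 = G x) : ∀ x ∈ U, Dt f x.1 x.2 = dirDeriv timeDir G x := by
  intro x hx
  have hloc : (fun x : ℝ × Pt => f x.1 x.2) =ᶠ[𝓝 x] G := eventually_of_mem (hU.mem_nhds hx) hfG
  rw [Dt_eq_dirDeriv ((hG.differentiableAt_of_isOpen hU hx).congr_of_eventuallyEq hloc),
    hloc.dirDeriv_eq]

theorem Dsp_eq_dirDeriv_of_eqOn (hU : IsOpen U) (hG : ContDiffOn ℝ ∞ G U)
    (hfG : ∀ x ∈ U, f x.1 x.2 = G x) (j : Fin 3) :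
    ∀ x ∈ U, Dsp j f x.1 x.2 = dirDeriv (spaceDir j) G x := by
  intro x hx
  have hloc : (fun x : ℝ × Pt => f x.1 x.2) =ᶠ[𝓝 x] G := eventually_of_mem (hU.mem_nhds hx) hfG
  rw [Dsp_eq_dirDeriv ((hG.differentiableAt_of_isOpen hU hx).congr_of_eventuallyEq hloc),
    hloc.dirDeriv_eq]

theorem Box_eq_wave_of_eqOn (hU : IsOpen U) (hG : ContDiffOn ℝ ∞ G U)
    (hfG : ∀ x ∈ U, f x.1 x.2 = G x) : ∀ x ∈ U, Box f x.1 x.2 = wave G x := by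
  intro x hx
  have htt := Dt_eq_dirDeriv_of_eqOn hU (hG.dirDeriv hU _)
    (Dt_eq_dirDeriv_of_eqOn hU hG hfG) x hx
  have hjj j := Dsp_eq_dirDeriv_of_eqOn hU (hG.dirDeriv hU _)
    (Dsp_eq_dirDeriv_of_eqOn hU hG hfG j) j x hx
  simp only [Box, htt, hjj, wave]

theorem Sc_eq_euler_of_eqOn (hU : IsOpen U) (hG : ContDiffOn ℝ ∞ G U)
    (hfG : ∀ x ∈ U, f x.1 x.2 = G x) : ∀ x ∈ U, Sc f x.1 x.2 = euler G x := by
  intro x hx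
  simp only [Sc, Dt_eq_dirDeriv_of_eqOn hU hG hfG x hx,
    fun j => Dsp_eq_dirDeriv_of_eqOn hU hG hfG j x hx, euler_eq_scaling]

end Transfer

theorem scaling_commutation
    (Uset : Set (ℝ × Pt)) (hU : IsOpen Uset)
    (Y : STV) (p : STF)
    (hY : ∀ i, ContDiffOn ℝ (⊤ : ℕ∞) (fun q : ℝ × Pt => Y q.1 q.2 i) Uset)
    (hp : ContDiffOn ℝ (⊤ : ℕ∞) (fun q : ℝ × Pt => p q.1 q.2) Uset)
    (heq : ∀ q ∈ Uset, ∀ i : Fin 3,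
      Box (fun s y => Y s y i) q.1 q.2 =
        - Dsp i p q.1 q.2
          - ∑ k, Dsp i (fun s y => Y s y k) q.1 q.2 * Box (fun s y => Y s y k) q.1 q.2) :
    ∀ q ∈ Uset, ∀ j : Fin 3,
      Box (fun s y => ScT Y s y j) q.1 q.2 =
        - (∑ k, Dsp j (fun s y => ScT Y s y k) q.1 q.2
              * Box (fun s y => Y s y k) q.1 q.2)
          - (∑ k, Dsp j (fun s y => Y s y k) q.1 q.2
              * Box (fun s y => ScT Y s y k) q.1 q.2)
          - Dsp j (Sc p) q.1 q.2 := by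
  intro q hq j
  set F : Fin 3 → ℝ × Pt → ℝ := fun k x => Y x.1 x.2 k
  set P : ℝ × Pt → ℝ := fun x => p x.1 x.2
  have hScT k : ∀ x ∈ Uset, ScT Y x.1 x.2 k = modEuler (F k) x := fun x hx =>
    congrArg (· - F k x) (Sc_eq_euler_of_eqOn hU (hY k) (fun _ _ => rfl) x hx)
  have hDspY i k : ∀ x ∈ Uset, Dsp i (fun s y => Y s y k) x.1 x.2 = dirDeriv (spaceDir i) (F k) x :=
    Dsp_eq_dirDeriv_of_eqOn hU (hY k) (fun _ _ => rfl) i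
  have hBoxY k : ∀ x ∈ Uset, Box (fun s y => Y s y k) x.1 x.2 = wave (F k) x :=
    Box_eq_wave_of_eqOn hU (hY k) (fun _ _ => rfl)
  have hDspP i : ∀ x ∈ Uset, Dsp i p x.1 x.2 = dirDeriv (spaceDir i) P x :=
    Dsp_eq_dirDeriv_of_eqOn hU hp (fun _ _ => rfl) i
  have hDspScT k : Dsp j (fun s y => ScT Y s y k) q.1 q.2 =
      dirDeriv (spaceDir j) (modEuler (F k)) q :=
    Dsp_eq_dirDeriv_of_eqOn hU ((hY k).modEuler hU) (hScT k) j q hq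
  have hBoxScT k : Box (fun s y => ScT Y s y k) q.1 q.2 = wave (modEuler (F k)) q :=
    Box_eq_wave_of_eqOn hU ((hY k).modEuler hU) (hScT k) q hq
  have hDspSc : Dsp j (Sc p) q.1 q.2 = dirDeriv (spaceDir j) (euler P) q :=
    Dsp_eq_dirDeriv_of_eqOn hU (hp.euler hU) (Sc_eq_euler_of_eqOn hU hp fun _ _ => rfl) j q hq
  have heqF : ∀ x ∈ Uset, ∀ i, wave (F i) x =
      -dirDeriv (spaceDir i) P x - ∑ k, dirDeriv (spaceDir i) (F k) x * wave (F k) x := by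
    intro x hx i
    simpa only [hBoxY _ x hx, hDspY _ _ x hx, hDspP _ x hx] using heq x hx i
  simp only [hBoxScT, hDspScT, hDspY _ _ q hq, hBoxY _ q hq, hDspSc]
  exact wave_modEuler_of_elastodynamic hU hY hp heqF hq j

end Stmt19
end
end
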